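/- arXiv:2404.03370 — 3 statements merged into one kernel-verified Lean document; each statement's English description precedes it below -/
import Mathlib

section
/- Let X and H be real separable Hilbert spaces with X embedded densely and compactly in H, and let T > 0. Then the embedding of L¹(0,T;X) ∩ H¹(0,T;H) into C([0,T];H) is compact: every sequence (u_n) of functions u_n : [0,T] → H that is bounded both in the L¹(0,T;X)-norm and in the H¹(0,T;H)-norm admits a subsequence converging uniformly on [0,T] in the norm of H. -/
/-!
The `H¹(0,T;H)` bound and Cauchy–Schwarz give the uniform Hölder estimate
`‖u n t - u n s‖_H ≤ √C * √|t - s|`, so the sequence is equicontinuous on `[0,T]`.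
Its values are totally bounded: averaging `u n` over a window of length `h` containing `t`
produces a vector of `X`-norm at most `C / h` (by the `L¹(0,T;X)` bound), whose image under the
compact embedding lies in a fixed compact subset of `H`, and which is `√C * √h`-close to
`u n t` by the Hölder estimate. Arzelà–Ascoli then yields a uniformly convergent subsequence.
-/

open MeasureTheory Filter Topology Set
open scoped ENNReal Interval

theorem Metric.totallyBounded_of_forall_exists_dist_le {E : Type*} [PseudoMetricSpace E]
    {A : Set E} (h : ∀ ε > 0, ∃ K : Set E, TotallyBounded K ∧ ∀ x ∈ A, ∃ y ∈ K, dist x y ≤ ε) :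
    TotallyBounded A := by
  rw [Metric.totallyBounded_iff]
  intro ε hε
  obtain ⟨K, hK, hAK⟩ := h (ε / 2) (half_pos hε)
  obtain ⟨t, ht, hKt⟩ := Metric.totallyBounded_iff.1 hK (ε / 2) (half_pos hε)
  refine ⟨t, ht, fun x hx => ?_⟩
  obtain ⟨y, hy, hxy⟩ := hAK x hx
  obtain ⟨z, hz, hyz⟩ := mem_iUnion₂.1 (hKt hy)
  refine mem_iUnion₂.2 ⟨z, hz, ?_⟩
  rw [Metric.mem_ball] at hyz ⊢
  linarith [dist_triangle x y z]

theorem exists_subseq_tendstoUniformlyOn_of_equicontinuous {α β : Type*} [TopologicalSpace α]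
    [MetricSpace β] [CompleteSpace β] {s : Set α} (hs : IsCompact s) (F : ℕ → α → β)
    (hF : Equicontinuous fun n (x : s) => F n x) (htb : TotallyBounded (⋃ n, F n '' s)) :
    ∃ φ : ℕ → ℕ, StrictMono φ ∧ ∃ v : α → β, TendstoUniformlyOn (fun k => F (φ k)) v atTop s := by
  classical
  have := isCompact_iff_compactSpace.1 hs
  let G (n : ℕ) : BoundedContinuousFunction s β := .mkOfCompact ⟨fun x => F n x, hF.continuous n⟩
  have hG : IsCompact (closure (range G)) := by
    refine BoundedContinuousFunction.arzela_ascoli _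
      (htb.closure.isCompact_of_isClosed isClosed_closure) _ ?_ ?_
    · rintro _ x ⟨n, rfl⟩
      exact subset_closure (mem_iUnion.2 ⟨n, x, x.2, rfl⟩)
    · convert hF.comp fun g : range G => g.2.choose using 1
      ext g x
      exact (DFunLike.congr_fun g.2.choose_spec x).symm
  obtain ⟨g, -, φ, hφ, hlim⟩ := hG.tendsto_subseq fun n => subset_closure (mem_range_self n)
  refine ⟨φ, hφ, fun x => if hx : x ∈ s then g ⟨x, hx⟩ else F 0 x, ?_⟩
  have hv : (fun x => if hx : x ∈ s then g ⟨x, hx⟩ else F 0 x) ∘ Subtype.val = g := by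
    ext x
    simp [x.2]
  rw [tendstoUniformlyOn_iff_tendstoUniformly_comp_coe, hv]
  exact BoundedContinuousFunction.tendsto_iff_tendstoUniformly.1 hlim

theorem integral_norm_le_sqrt_integral_norm_sq_mul_sqrt {α E : Type*} [MeasurableSpace α]
    {μ : Measure α} [IsFiniteMeasure μ] [NormedAddCommGroup E] {g : α → E} (hg : MemLp g 2 μ) :
    ∫ x, ‖g x‖ ∂μ ≤ √(∫ x, ‖g x‖ ^ 2 ∂μ) * √(μ.real univ) := by
  have h := integral_mul_norm_le_Lp_mul_Lq (f := fun x => ‖g x‖) (g := fun _ => (1 : ℝ))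
    Real.HolderConjugate.two_two (by simpa using hg.norm) (by simpa using memLp_const (1 : ℝ))
  simpa [Real.sqrt_eq_rpow] using h

theorem dist_le_sqrt_mul_sqrt_of_eq_add_integral {E : Type*} [NormedAddCommGroup E]
    [NormedSpace ℝ E] {f g : ℝ → E} {T M : ℝ}
    (hf : ∀ t ∈ Icc 0 T, f t = f 0 + ∫ s in (0 : ℝ)..t, g s)
    (hg : MemLp g 2 (volume.restrict (Ioc 0 T))) (hM : ∫ t in Ioc 0 T, ‖g t‖ ^ 2 ≤ M)
    {s t : ℝ} (hs : s ∈ Icc 0 T) (ht : t ∈ Icc 0 T) :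
    dist (f s) (f t) ≤ √M * √(dist s t) := by
  have hsub : Ι t s ⊆ Ioc 0 T := Ioc_subset_Ioc (le_min ht.1 hs.1) (max_le ht.2 hs.2)
  have hint : IntegrableOn g (Icc 0 T) :=
    (integrableOn_Icc_iff_integrableOn_Ioc).mpr (hg.integrable one_le_two)
  have hii : ∀ r ∈ Icc 0 T, IntervalIntegrable g volume 0 r := fun r hr =>
    (hint.mono_set (uIcc_subset_Icc (left_mem_Icc.2 (hr.1.trans hr.2)) hr)).intervalIntegrable
  have hdiff : f s - f t = ∫ r in t..s, g r := by
    rw [hf s hs, hf t ht, add_sub_add_left_eq_sub,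
      intervalIntegral.integral_interval_sub_left (hii s hs) (hii t ht)]
  have hsq : ∫ r in Ι t s, ‖g r‖ ^ 2 ≤ M :=
    (setIntegral_mono_set (hg.integrable_norm_pow two_ne_zero)
      (Eventually.of_forall fun _ => by positivity) hsub.eventuallyLE).trans hM
  have hvol : volume.real (Ι t s) = dist s t := by
    rw [measureReal_def, Real.volume_uIoc, ENNReal.toReal_ofReal (abs_nonneg _), Real.dist_eq]
  calc dist (f s) (f t) = ‖∫ r in t..s, g r‖ := by rw [dist_eq_norm, hdiff]
    _ ≤ ∫ r in Ι t s, ‖g r‖ := intervalIntegral.norm_integral_le_integral_norm_uIoc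
    _ ≤ √(∫ r in Ι t s, ‖g r‖ ^ 2) * √(volume.real (Ι t s)) := by
      have : IsFiniteMeasure (volume.restrict (Ι t s)) := by rw [uIoc]; infer_instance
      simpa using integral_norm_le_sqrt_integral_norm_sq_mul_sqrt
        (hg.mono_measure (Measure.restrict_mono hsub le_rfl))
    _ ≤ √M * √(dist s t) := by rw [hvol]; gcongr

theorem norm_setAverage_le {α E : Type*} [MeasurableSpace α] {μ : Measure α}
    [NormedAddCommGroup E] [NormedSpace ℝ E] (f : α → E) (s : Set α) :
    ‖⨍ x in s, f x ∂μ‖ ≤ (μ.real s)⁻¹ * ∫ x in s, ‖f x‖ ∂μ := by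
  rw [setAverage_eq, norm_smul, Real.norm_of_nonneg (inv_nonneg.2 measureReal_nonneg)]
  gcongr
  exact norm_integral_le_integral_norm _

theorem ContinuousLinearMap.dist_setAverage_le {α E F : Type*} [MeasurableSpace α]
    {μ : Measure α} [NormedAddCommGroup E] [NormedSpace ℝ E] [CompleteSpace E]
    [NormedAddCommGroup F] [NormedSpace ℝ F] [CompleteSpace F] (L : E →L[ℝ] F)
    {f : α → E} {s : Set α}
    (hs : MeasurableSet s) (h0 : μ s ≠ 0) (hfin : μ s ≠ ∞) (hf : IntegrableOn f s μ)
    {c : F} {r : ℝ} (h : ∀ x ∈ s, dist (L (f x)) c ≤ r) :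
    dist (L (⨍ x in s, f x ∂μ)) c ≤ r := by
  have hcomm : L (⨍ x in s, f x ∂μ) = ⨍ x in s, L (f x) ∂μ := by
    rw [setAverage_eq, setAverage_eq, L.map_smul, L.integral_comp_comm hf]
  rw [hcomm, ← Metric.mem_closedBall]
  exact (convex_closedBall c r).set_average_mem Metric.isClosed_closedBall h0 hfin
    ((ae_restrict_iff' hs).2 (Eventually.of_forall h)) (L.integrable_comp hf)

theorem exists_Icc_add_subset_Icc {h T t : ℝ} (h0 : 0 ≤ h) (hhT : h ≤ T) (ht : t ∈ Icc 0 T) :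
    ∃ a, 0 ≤ a ∧ a + h ≤ T ∧ t ∈ Icc a (a + h) := by
  refine ⟨min t (T - h), le_min ht.1 (by linarith), ?_, min_le_left _ _, ?_⟩
  · linarith [min_le_right t (T - h)]
  · rcases le_total t (T - h) with hc | hc
    · rw [min_eq_left hc]
      linarith
    · rw [min_eq_right hc]
      linarith [ht.2]

theorem IsCompactOperator.totallyBounded_iUnion_image_of_continuity_modulus {ι X H : Type*}
    [NormedAddCommGroup X] [NormedSpace ℝ X] [CompleteSpace X]
    [NormedAddCommGroup H] [NormedSpace ℝ H] [CompleteSpace H]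
    {L : X →L[ℝ] H} (hL : IsCompactOperator L)
    {T : ℝ} (hT : 0 < T) {u : ι → ℝ → X} (hu : ∀ i, IntegrableOn (u i) (Ioc 0 T))
    {C : ℝ} (hC : ∀ i, ∫ t in Ioc 0 T, ‖u i t‖ ≤ C) (b : ℝ → ℝ) (hb : Tendsto b (𝓝 0) (𝓝 0))
    (hmod : ∀ i, ∀ s ∈ Icc 0 T, ∀ t ∈ Icc 0 T, dist (L (u i s)) (L (u i t)) ≤ b (dist s t)) :
    TotallyBounded (⋃ i, (fun t => L (u i t)) '' Icc 0 T) := by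
  refine Metric.totallyBounded_of_forall_exists_dist_le fun ε hε => ?_
  obtain ⟨δ, hδ, hbδ⟩ := Metric.tendsto_nhds_nhds.1 hb ε hε
  set h := min T (δ / 2)
  have hh : 0 < h := lt_min hT (half_pos hδ)
  obtain ⟨K, hK, hLK⟩ := hL.image_closedBall_subset_compact (C / h)
  refine ⟨K, hK.totallyBounded, ?_⟩
  simp only [mem_iUnion, mem_image]
  rintro _ ⟨i, t, ht, rfl⟩
  obtain ⟨a, ha, haT, hta⟩ := exists_Icc_add_subset_Icc hh.le (min_le_left T (δ / 2)) ht
  have hsub : Ioc a (a + h) ⊆ Ioc 0 T := Ioc_subset_Ioc ha haT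
  refine ⟨L (⨍ s in Ioc a (a + h), u i s), hLK ⟨_, ?_, rfl⟩, ?_⟩
  · rw [mem_closedBall_zero_iff]
    calc ‖⨍ s in Ioc a (a + h), u i s‖ ≤ h⁻¹ * ∫ s in Ioc a (a + h), ‖u i s‖ := by
          simpa [hh.le] using norm_setAverage_le (μ := volume) (u i) (Ioc a (a + h))
      _ ≤ h⁻¹ * C := by
          gcongr
          exact (setIntegral_mono_set (hu i).norm (Eventually.of_forall fun _ => norm_nonneg _)
            hsub.eventuallyLE).trans (hC i)
      _ = C / h := inv_mul_eq_div h C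
  · rw [dist_comm]
    refine L.dist_setAverage_le (μ := volume) measurableSet_Ioc (by simp [hh]) (by simp)
      ((hu i).mono_set hsub) fun s hs => ?_
    have hst : dist s t < δ := by
      rw [Real.dist_eq, abs_lt]
      constructor <;> linarith [hs.1, hs.2, hta.1, hta.2, min_le_right T (δ / 2)]
    have hb := hbδ (x := dist s t) (by rwa [dist_zero_right, Real.norm_of_nonneg dist_nonneg])
    rw [dist_zero_right, Real.norm_eq_abs] at hb
    exact (hmod i s (Ioc_subset_Icc_self (hsub hs)) t ht).trans ((le_abs_self _).trans hb.le)

theorem stmt_0_general {X H : Type*}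
    [NormedAddCommGroup X] [InnerProductSpace ℝ X] [CompleteSpace X]
    [NormedAddCommGroup H] [InnerProductSpace ℝ H] [CompleteSpace H]
    (ι : X →L[ℝ] H)
    (hι_cpt : IsCompactOperator ι)
    (T : ℝ) (hT : 0 < T)
    (u : ℕ → ℝ → X) (u' : ℕ → ℝ → H)
    -- each `u n ∈ L¹(0,T;X)`
    (humeas : ∀ n, AEStronglyMeasurable (u n) (volume.restrict (Set.Ioc 0 T)))
    (huL1X : ∀ n, Integrable (fun t => ‖u n t‖) (volume.restrict (Set.Ioc 0 T)))
    -- each `ι ∘ u n ∈ H¹(0,T;H)`: absolutely continuous with a.e. derivative `u' n ∈ L²(0,T;H)`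
    (hac : ∀ n, ∀ t ∈ Set.Icc 0 T, ι (u n t) = ι (u n 0) + ∫ s in (0:ℝ)..t, u' n s)
    (hu'L2 : ∀ n, MemLp (u' n) 2 (volume.restrict (Set.Ioc 0 T)))
    -- boundedness in `L¹(0,T;X)` and in `H¹(0,T;H)`
    (C : ℝ)
    (hbddL1X : ∀ n, ∫ t in Set.Ioc 0 T, ‖u n t‖ ≤ C)
    (hbddH1 : ∀ n, (∫ t in Set.Ioc 0 T, ‖ι (u n t)‖ ^ 2) +
        (∫ t in Set.Ioc 0 T, ‖u' n t‖ ^ 2) ≤ C) :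
    ∃ φ : ℕ → ℕ, StrictMono φ ∧ ∃ v : ℝ → H,
      TendstoUniformlyOn (fun k t => ι (u (φ k) t)) v atTop (Set.Icc 0 T) := by
  have hu'C : ∀ n, ∫ t in Ioc 0 T, ‖u' n t‖ ^ 2 ≤ C := fun n =>
    (le_add_of_nonneg_left (integral_nonneg fun t => sq_nonneg ‖ι (u n t)‖)).trans (hbddH1 n)
  have hmod : ∀ n, ∀ s ∈ Icc 0 T, ∀ t ∈ Icc 0 T,
      dist (ι (u n s)) (ι (u n t)) ≤ √C * √(dist s t) := fun n _ hs _ ht =>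
    dist_le_sqrt_mul_sqrt_of_eq_add_integral (f := fun t => ι (u n t)) (hac n) (hu'L2 n)
      (hu'C n) hs ht
  have hb : Tendsto (fun r => √C * √r) (𝓝 0) (𝓝 0) :=
    (by fun_prop : Continuous fun r => √C * √r).tendsto' 0 0 (by simp)
  refine exists_subseq_tendstoUniformlyOn_of_equicontinuous isCompact_Icc (fun n t => ι (u n t))
    (Metric.equicontinuous_of_continuity_modulus _ hb _ fun s t n => hmod n s s.2 t t.2) ?_
  exact hι_cpt.totallyBounded_iUnion_image_of_continuity_modulus hT
    (fun n => (integrable_norm_iff (humeas n)).1 (huL1X n)) hbddL1X _ hb hmod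

/-- **Aubin–Lions–Simon compactness**: with `X ⊂ H` compactly (via a compact, injective,
densely-ranged embedding `ι`), every sequence bounded in `L¹(0,T;X) ∩ H¹(0,T;H)` has a
subsequence converging uniformly on `[0,T]` in the norm of `H`. -/
theorem stmt_0 {X H : Type*}
    [NormedAddCommGroup X] [InnerProductSpace ℝ X] [CompleteSpace X]
    [TopologicalSpace.SeparableSpace X]
    [NormedAddCommGroup H] [InnerProductSpace ℝ H] [CompleteSpace H]
    [TopologicalSpace.SeparableSpace H]
    (ι : X →L[ℝ] H) (hι_inj : Function.Injective ι) (hι_dense : DenseRange ι)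
    (hι_cpt : IsCompactOperator ι)
    (T : ℝ) (hT : 0 < T)
    (u : ℕ → ℝ → X) (u' : ℕ → ℝ → H)
    -- each `u n ∈ L¹(0,T;X)`
    (humeas : ∀ n, AEStronglyMeasurable (u n) (volume.restrict (Set.Ioc 0 T)))
    (huL1X : ∀ n, Integrable (fun t => ‖u n t‖) (volume.restrict (Set.Ioc 0 T)))
    -- each `ι ∘ u n ∈ H¹(0,T;H)`: absolutely continuous with a.e. derivative `u' n ∈ L²(0,T;H)`
    (hac : ∀ n, ∀ t ∈ Set.Icc 0 T, ι (u n t) = ι (u n 0) + ∫ s in (0:ℝ)..t, u' n s)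
    (hu'L2 : ∀ n, MemLp (u' n) 2 (volume.restrict (Set.Ioc 0 T)))
    -- boundedness in `L¹(0,T;X)` and in `H¹(0,T;H)`
    (C : ℝ)
    (hbddL1X : ∀ n, ∫ t in Set.Ioc 0 T, ‖u n t‖ ≤ C)
    (hbddH1 : ∀ n, (∫ t in Set.Ioc 0 T, ‖ι (u n t)‖ ^ 2) +
        (∫ t in Set.Ioc 0 T, ‖u' n t‖ ^ 2) ≤ C) :
    ∃ φ : ℕ → ℕ, StrictMono φ ∧ ∃ v : ℝ → H,
      TendstoUniformlyOn (fun k t => ι (u (φ k) t)) v atTop (Set.Icc 0 T) :=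
  stmt_0_general ι hι_cpt T hT u u' humeas huL1X hac hu'L2 C hbddL1X hbddH1
end

section
/- Let H be a real Hilbert space and ψ ∈ C¹(H × H; [0,∞)) with ψ(u,·) convex for every u, and such that for every R > 0 there is c_{5,R} > 0 with ‖d₁ψ(u,v)‖_H ≤ c_{5,R}(1 + ‖v‖_H²) for all u, v ∈ H with ‖u‖_H ≤ R. Let T > 0, let μ ∈ L^∞(0,T) be nonnegative, and let u_k → u in C([0,T];H). Then the convex functionals v ↦ ∫₀ᵀ μ(t) ψ(u_k(t), v(t)) dt converge to v ↦ ∫₀ᵀ μ(t) ψ(u(t), v(t)) dt in the sense of Mosco on L²(0,T;H): the liminf inequality holds along every weakly convergent sequence in L²(0,T;H), and every v ∈ L²(0,T;H) admits a recovery sequence converging strongly in L²(0,T;H). -/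
open MeasureTheory Filter Topology
open scoped ENNReal NNReal InnerProductSpace Gradient

/-!
The constant sequence is a recovery sequence, and for the liminf inequality one first compares
with the functional at `ulim`. The mean value theorem and the growth bound on `d₁ψ` give
`|ψ(a, w) - ψ(b, w)| ≤ c (1 + ‖w‖²) ‖a - b‖` for `a, b` in a ball, so the functionals at `u k` and
at `ulim` differ by `O(sup ‖u k - ulim‖)` uniformly on bounded subsets of `L²(0,T;H)`; weakly
convergent sequences are bounded by Banach–Steinhaus. What remains is weak lower semicontinuity
at `ulim`: by convexity `ψ(ulim, vₖ) ≥ ψ(ulim, v) + ⟪∇ψ(ulim, ·)(v), vₖ - v⟫`, the integral of the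
right-hand side over a set where `ψ(ulim, v)` and the gradient are bounded converges by weak
convergence, and monotone convergence over an exhausting family of such sets concludes.
-/

theorem ConvexOn.add_apply_sub_le_of_hasFDerivAt {E : Type*} [NormedAddCommGroup E]
    [NormedSpace ℝ E] {S : Set E} {f : E → ℝ} {f' : E →L[ℝ] ℝ} {x y : E}
    (hf : ConvexOn ℝ S f) (hx : x ∈ S) (hy : y ∈ S) (hf' : HasFDerivAt f f' x) :
    f x + f' (y - x) ≤ f y := by
  have hline := hf.comp_affineMap (AffineMap.lineMap x y : ℝ →ᵃ[ℝ] E)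
  have hderiv : HasDerivAt (f ∘ (AffineMap.lineMap x y : ℝ →ᵃ[ℝ] E)) (f' (y - x)) 0 := by
    refine HasFDerivAt.comp_hasDerivAt (0 : ℝ) ?_ AffineMap.hasDerivAt_lineMap
    simpa using hf'
  have := hline.le_slope_of_hasDerivAt (by simpa using hx) (by simpa using hy) one_pos hderiv
  simp only [slope_def_field, Function.comp_apply, AffineMap.lineMap_apply_zero,
    AffineMap.lineMap_apply_one, sub_zero, div_one] at this
  linarith

section Gradient

variable {E H : Type*} [NormedAddCommGroup E] [NormedSpace ℝ E]
  [NormedAddCommGroup H] [InnerProductSpace ℝ H] [CompleteSpace H]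

theorem ConvexOn.add_inner_gradient_le {f : H → ℝ} (hf : ConvexOn ℝ Set.univ f)
    (hd : Differentiable ℝ f) (x y : H) :
    f x + ⟪∇ f x, y - x⟫_ℝ ≤ f y := by
  simpa using hf.add_apply_sub_le_of_hasFDerivAt trivial trivial (hd x).hasFDerivAt

theorem ContDiff.continuous_gradient_right {ψ : E → H → ℝ}
    (hψ : ContDiff ℝ 1 (fun p : E × H => ψ p.1 p.2)) :
    Continuous (fun p : E × H => ∇ (ψ p.1) p.2) := by
  have hfderiv : ContDiff ℝ 0 (fun p : E × H => fderiv ℝ (ψ p.1) p.2) :=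
    ContDiff.fderiv (f := fun p y => ψ p.1 y)
      (hψ.comp ((contDiff_fst.comp contDiff_fst).prodMk contDiff_snd)) contDiff_snd le_rfl
  exact (InnerProductSpace.toDual ℝ H).symm.continuous.comp hfderiv.continuous

end Gradient

theorem ENNReal.liminf_le_liminf_of_forall_le_add {ι : Type*} {l : Filter ι} [l.NeBot]
    {F G : ι → ℝ≥0∞} (h : ∀ ε : ℝ≥0, 0 < ε → ∀ᶠ k in l, G k ≤ F k + ε) :
    liminf G l ≤ liminf F l := by
  refine ENNReal.le_of_forall_pos_le_add fun ε hε _ => ?_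
  calc liminf G l ≤ liminf (fun k => F k + ε) l := liminf_le_liminf (h ε hε)
    _ = liminf F l + ε := liminf_add_const l F _ (by isBoundedDefault) (by isBoundedDefault)

theorem ENNReal.limsup_le_limsup_of_forall_le_add {ι : Type*} {l : Filter ι} [l.NeBot]
    {F G : ι → ℝ≥0∞} (h : ∀ ε : ℝ≥0, 0 < ε → ∀ᶠ k in l, G k ≤ F k + ε) :
    limsup G l ≤ limsup F l := by
  refine ENNReal.le_of_forall_pos_le_add fun ε hε _ => ?_
  calc limsup G l ≤ limsup (fun k => F k + ε) l := limsup_le_limsup (h ε hε)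
    _ = limsup F l + ε := limsup_add_const l F _ (by isBoundedDefault) (by isBoundedDefault)

section Integrals

variable {α : Type*} [MeasurableSpace α] {ν : Measure α}

theorem ofReal_integral_le_lintegral_ofReal {f : α → ℝ} (hf : Integrable f ν) :
    ENNReal.ofReal (∫ t, f t ∂ν) ≤ ∫⁻ t, ENNReal.ofReal (f t) ∂ν := by
  rw [integral_eq_lintegral_pos_part_sub_lintegral_neg_part hf]
  exact (ENNReal.ofReal_le_ofReal (sub_le_self _ ENNReal.toReal_nonneg)).trans
    ENNReal.ofReal_toReal_le

theorem lintegral_ofReal_le_add_mul {f g r : α → ℝ} {δ : ℝ} (hr0 : ∀ t, 0 ≤ r t)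
    (hr : AEMeasurable r ν) (h : ∀ᵐ t ∂ν, f t ≤ g t + δ * r t) :
    ∫⁻ t, ENNReal.ofReal (f t) ∂ν ≤
      ∫⁻ t, ENNReal.ofReal (g t) ∂ν + ENNReal.ofReal δ * ∫⁻ t, ENNReal.ofReal (r t) ∂ν := by
  calc ∫⁻ t, ENNReal.ofReal (f t) ∂ν
      ≤ ∫⁻ t, ENNReal.ofReal (g t) + ENNReal.ofReal δ * ENNReal.ofReal (r t) ∂ν := by
        refine lintegral_mono_ae (h.mono fun t ht => ?_)
        rw [← ENNReal.ofReal_mul' (hr0 t)]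
        exact (ENNReal.ofReal_le_ofReal ht).trans ENNReal.ofReal_add_le
    _ = _ := by
        rw [lintegral_add_right' _ (hr.ennreal_ofReal.const_mul _),
          lintegral_const_mul' _ _ ENNReal.ofReal_ne_top]

section Lipschitz

variable {E F : Type*} [NormedAddCommGroup E] [NormedSpace ℝ E] [NormedAddCommGroup F]

theorem lintegral_ofReal_one_add_norm_sq (w : α → F) :
    ∫⁻ t, ENNReal.ofReal (1 + ‖w t‖ ^ 2) ∂ν = ν Set.univ + eLpNorm w 2 ν ^ 2 := by
  have hsq : eLpNorm w 2 ν ^ 2 = ∫⁻ t, ‖w t‖ₑ ^ 2 ∂ν := by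
    simpa using eLpNorm_nnreal_pow_eq_lintegral (f := w) (μ := ν) (p := 2) two_ne_zero
  simp_rw [hsq, ENNReal.ofReal_add zero_le_one (sq_nonneg _), ENNReal.ofReal_one,
    ENNReal.ofReal_pow (norm_nonneg _), ofReal_norm]
  rw [lintegral_add_left measurable_const, lintegral_one]

variable {ψ : E → F → ℝ} {μw : α → ℝ} {M R c : ℝ}

theorem lintegral_le_add_of_norm_sub_le {δ : ℝ} (hψ : ∀ w, Differentiable ℝ fun x => ψ x w)
    (hc : ∀ x w, ‖x‖ ≤ R → ‖fderiv ℝ (fun x => ψ x w) x‖ ≤ c * (1 + ‖w‖ ^ 2))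
    (hμnn : ∀ t, 0 ≤ μw t) (hμbdd : ∀ t, μw t ≤ M) {a b : α → E} {w : α → F}
    (hw : AEStronglyMeasurable w ν) (hab : ∀ᵐ t ∂ν, ‖a t‖ ≤ R ∧ ‖b t‖ ≤ R ∧ ‖a t - b t‖ ≤ δ) :
    ∫⁻ t, ENNReal.ofReal (μw t * ψ (a t) (w t)) ∂ν ≤
      ∫⁻ t, ENNReal.ofReal (μw t * ψ (b t) (w t)) ∂ν +
        ENNReal.ofReal (M * c * δ) * (ν Set.univ + eLpNorm w 2 ν ^ 2) := by
  rw [← lintegral_ofReal_one_add_norm_sq]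
  refine lintegral_ofReal_le_add_mul (fun t => by positivity)
    (aemeasurable_const.add (hw.norm.aemeasurable.pow_const 2)) ?_
  filter_upwards [hab] with t ⟨ha, hb, hδ⟩
  have hC : 0 ≤ c * (1 + ‖w t‖ ^ 2) := (norm_nonneg _).trans (hc _ (w t) ha)
  have hlip : ψ (a t) (w t) - ψ (b t) (w t) ≤ c * (1 + ‖w t‖ ^ 2) * δ := by
    have := (convex_closedBall (0 : E) R).norm_image_sub_le_of_norm_fderiv_le
      (fun x _ => (hψ (w t)).differentiableAt) (fun x hx => hc x (w t) (by simpa using hx))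
      (by simpa using hb) (by simpa using ha)
    rw [Real.norm_eq_abs] at this
    exact (le_abs_self _).trans (this.trans (mul_le_mul_of_nonneg_left hδ hC))
  have hCδ : 0 ≤ c * (1 + ‖w t‖ ^ 2) * δ := mul_nonneg hC ((norm_nonneg _).trans hδ)
  nlinarith [mul_le_mul_of_nonneg_left hlip (hμnn t), mul_le_mul_of_nonneg_right (hμbdd t) hCδ]

theorem eventually_lintegral_le_add_of_tendstoUniformlyOn [IsFiniteMeasure ν]
    {s : Set α} {u : ℕ → α → E} {ulim : α → E}
    (hψ : ∀ w, Differentiable ℝ fun x => ψ x w)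
    (hc : ∀ x w, ‖x‖ ≤ R + 1 → ‖fderiv ℝ (fun x => ψ x w) x‖ ≤ c * (1 + ‖w‖ ^ 2))
    (hμnn : ∀ t, 0 ≤ μw t) (hμbdd : ∀ t, μw t ≤ M) (hs : ∀ᵐ t ∂ν, t ∈ s)
    (hR : ∀ t ∈ s, ‖ulim t‖ ≤ R) (hu : TendstoUniformlyOn u ulim atTop s)
    {B : ℝ≥0∞} (hB : B ≠ ⊤) {ε : ℝ≥0} (hε : 0 < ε) :
    ∀ᶠ k in atTop, ∀ w : α → F, AEStronglyMeasurable w ν → eLpNorm w 2 ν ≤ B →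
      ∫⁻ t, ENNReal.ofReal (μw t * ψ (u k t) (w t)) ∂ν ≤
          ∫⁻ t, ENNReal.ofReal (μw t * ψ (ulim t) (w t)) ∂ν + ε ∧
        ∫⁻ t, ENNReal.ofReal (μw t * ψ (ulim t) (w t)) ∂ν ≤
          ∫⁻ t, ENNReal.ofReal (μw t * ψ (u k t) (w t)) ∂ν + ε := by
  set K := ENNReal.ofReal (M * c) * (ν Set.univ + B ^ 2)
  have hK : K ≠ ⊤ := ENNReal.mul_ne_top ENNReal.ofReal_ne_top
    (ENNReal.add_ne_top.2 ⟨measure_ne_top _ _, ENNReal.pow_ne_top hB⟩)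
  obtain ⟨δ, hδ, hδK⟩ := ENNReal.exists_nnreal_pos_mul_lt hK (ENNReal.coe_ne_zero.2 hε.ne')
  filter_upwards [Metric.tendstoUniformlyOn_iff.1 hu (min δ 1) (by positivity)]
    with k hk w hw hwB
  have hclose : ∀ᵐ t ∂ν, ‖u k t‖ ≤ R + 1 ∧ ‖ulim t‖ ≤ R + 1 ∧ ‖u k t - ulim t‖ ≤ δ := by
    filter_upwards [hs] with t ht
    have hd : ‖u k t - ulim t‖ < min (δ : ℝ) 1 := by rw [← dist_eq_norm, dist_comm]; exact hk t ht
    refine ⟨?_, (hR t ht).trans (by linarith), hd.le.trans (min_le_left _ _)⟩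
    calc ‖u k t‖ ≤ ‖ulim t‖ + ‖u k t - ulim t‖ := norm_le_insert' _ _
      _ ≤ R + 1 := add_le_add (hR t ht) (hd.le.trans (min_le_right _ _))
  have herr : ENNReal.ofReal (M * c * δ) * (ν Set.univ + eLpNorm w 2 ν ^ 2) ≤ ε := by
    calc _ ≤ (δ : ℝ≥0∞) * (ENNReal.ofReal (M * c) * (ν Set.univ + B ^ 2)) := by
          rw [ENNReal.ofReal_mul' δ.coe_nonneg, ENNReal.ofReal_coe_nnreal,
            mul_comm _ (δ : ℝ≥0∞), mul_assoc]
          gcongr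
      _ ≤ ε := hδK.le
  refine ⟨?_, ?_⟩
  · exact (lintegral_le_add_of_norm_sub_le hψ hc hμnn hμbdd hw hclose).trans (by gcongr)
  · refine (lintegral_le_add_of_norm_sub_le hψ hc hμnn hμbdd hw ?_).trans (by gcongr)
    filter_upwards [hclose] with t ⟨h₁, h₂, h₃⟩
    exact ⟨h₂, h₁, by rwa [norm_sub_rev]⟩

theorem limsup_lintegral_eq_of_tendstoUniformlyOn [IsFiniteMeasure ν]
    {s : Set α} {u : ℕ → α → E} {ulim : α → E}
    (hψ : ∀ w, Differentiable ℝ fun x => ψ x w)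
    (hc : ∀ x w, ‖x‖ ≤ R + 1 → ‖fderiv ℝ (fun x => ψ x w) x‖ ≤ c * (1 + ‖w‖ ^ 2))
    (hμnn : ∀ t, 0 ≤ μw t) (hμbdd : ∀ t, μw t ≤ M) (hs : ∀ᵐ t ∂ν, t ∈ s)
    (hR : ∀ t ∈ s, ‖ulim t‖ ≤ R) (hu : TendstoUniformlyOn u ulim atTop s)
    {v : α → F} (hv : MemLp v 2 ν) :
    limsup (fun k => ∫⁻ t, ENNReal.ofReal (μw t * ψ (u k t) (v t)) ∂ν) atTop =
      ∫⁻ t, ENNReal.ofReal (μw t * ψ (ulim t) (v t)) ∂ν := by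
  have hclose := fun (ε : ℝ≥0) (hε : 0 < ε) =>
    (eventually_lintegral_le_add_of_tendstoUniformlyOn hψ hc hμnn hμbdd hs hR hu
      hv.eLpNorm_ne_top hε).mono fun k hk => hk v hv.1 le_rfl
  refine le_antisymm ?_ ?_
  · simpa using ENNReal.limsup_le_limsup_of_forall_le_add fun ε hε =>
      (hclose ε hε).mono fun k hk => hk.1
  · calc _ = liminf (fun _ => ∫⁻ t, ENNReal.ofReal (μw t * ψ (ulim t) (v t)) ∂ν) atTop :=
          liminf_const _ |>.symm
      _ ≤ _ := ENNReal.liminf_le_liminf_of_forall_le_add fun ε hε =>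
          (hclose ε hε).mono fun k hk => hk.2
      _ ≤ _ := liminf_le_limsup (by isBoundedDefault) (by isBoundedDefault)

end Lipschitz

section WeakLowerSemicontinuity

variable {H : Type*} [NormedAddCommGroup H] [InnerProductSpace ℝ H]

def TendstoWeaklyInL2 (ν : Measure α) (vseq : ℕ → α → H) (v : α → H) : Prop :=
  ∀ w : α → H, MemLp w 2 ν →
    Tendsto (fun k => ∫ t, ⟪vseq k t, w t⟫_ℝ ∂ν) atTop (𝓝 (∫ t, ⟪v t, w t⟫_ℝ ∂ν))

theorem TendstoWeaklyInL2.exists_eLpNorm_le [CompleteSpace H] {vseq : ℕ → α → H}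
    {v : α → H} (hvk : ∀ k, MemLp (vseq k) 2 ν)
    (hweak : TendstoWeaklyInL2 ν vseq v) :
    ∃ B : ℝ≥0∞, B ≠ ⊤ ∧ ∀ k, eLpNorm (vseq k) 2 ν ≤ B := by
  set V : ℕ → Lp H 2 ν := fun k => (hvk k).toLp (vseq k)
  have hV : ∀ k (W : Lp H 2 ν), innerSL ℝ (V k) W = ∫ t, ⟪vseq k t, W t⟫_ℝ ∂ν := fun k W => by
    rw [innerSL_apply_apply, L2.inner_def]
    exact integral_congr_ae <| by filter_upwards [(hvk k).coeFn_toLp] with t ht; rw [ht]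
  have hpointwise : ∀ W : Lp H 2 ν, ∃ C, ∀ k, ‖innerSL ℝ (V k) W‖ ≤ C := fun W => by
    obtain ⟨C, hC⟩ := (hweak W (Lp.memLp W)).norm.bddAbove_range
    exact ⟨C, fun k => hV k W ▸ hC (Set.mem_range_self k)⟩
  obtain ⟨C, hC⟩ := banach_steinhaus hpointwise
  refine ⟨ENNReal.ofReal C, ENNReal.ofReal_ne_top, fun k => ?_⟩
  rw [← ENNReal.ofReal_toReal (hvk k).eLpNorm_ne_top, ← Lp.norm_toLp]
  exact ENNReal.ofReal_le_ofReal (by simpa only [innerSL_apply_norm] using hC k)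

theorem setLIntegral_le_liminf_of_forall_add_inner_le [IsFiniteMeasure ν] {A : Set α}
    (hA : MeasurableSet A) {C : ℝ} {f : α → ℝ} {g : α → H} {F : ℕ → α → ℝ}
    {vseq : ℕ → α → H} {v : α → H}
    (hf : AEStronglyMeasurable f ν) (hf0 : 0 ≤ᵐ[ν] f) (hfC : ∀ᵐ t ∂ν.restrict A, f t ≤ C)
    (hg : AEStronglyMeasurable g ν) (hgC : ∀ᵐ t ∂ν.restrict A, ‖g t‖ ≤ C)
    (hvk : ∀ k, MemLp (vseq k) 2 ν) (hv : MemLp v 2 ν)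
    (hweak : TendstoWeaklyInL2 ν vseq v)
    (hsub : ∀ k, ∀ᵐ t ∂ν, f t + ⟪g t, vseq k t - v t⟫_ℝ ≤ F k t) :
    ∫⁻ t in A, ENNReal.ofReal (f t) ∂ν ≤
      liminf (fun k => ∫⁻ t, ENNReal.ofReal (F k t) ∂ν) atTop := by
  set w := A.indicator g
  have hw : MemLp w 2 ν :=
    (memLp_indicator_iff_restrict hA).2 (MemLp.of_bound hg.restrict C hgC)
  have hfA : Integrable (A.indicator f) ν := by
    refine (integrable_indicator_iff hA).2 (Integrable.of_bound hf.restrict C ?_)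
    filter_upwards [hfC, ae_restrict_of_ae hf0] with t h h0
    rwa [Real.norm_eq_abs, abs_of_nonneg h0]
  have hinner : ∀ z : α → H, MemLp z 2 ν → Integrable (fun t => ⟪z t, w t⟫_ℝ) ν :=
    fun z hz => (L2.integrable_inner (hz.toLp z) (hw.toLp w)).congr <| by
      filter_upwards [hz.coeFn_toLp, hw.coeFn_toLp] with t h1 h2; rw [h1, h2]
  have hdiff : ∀ k, Integrable (fun t => ⟪vseq k t, w t⟫_ℝ - ⟪v t, w t⟫_ℝ) ν :=
    fun k => (hinner _ (hvk k)).sub (hinner _ hv)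
  set G : ℕ → α → ℝ := fun k t => A.indicator f t + (⟪vseq k t, w t⟫_ℝ - ⟪v t, w t⟫_ℝ)
  have hG : ∀ k, ∫ t, G k t ∂ν = ∫ t, A.indicator f t ∂ν +
      (∫ t, ⟪vseq k t, w t⟫_ℝ ∂ν - ∫ t, ⟪v t, w t⟫_ℝ ∂ν) := fun k => by
    rw [integral_add hfA (hdiff k), integral_sub (hinner _ (hvk k)) (hinner _ hv)]
  have hlim : Tendsto (fun k => ENNReal.ofReal (∫ t, G k t ∂ν)) atTop
      (𝓝 (ENNReal.ofReal (∫ t, A.indicator f t ∂ν))) := by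
    refine (ENNReal.continuous_ofReal.tendsto _).comp ?_
    have := (hweak w hw).sub_const (∫ t, ⟪v t, w t⟫_ℝ ∂ν) |>.const_add (∫ t, A.indicator f t ∂ν)
    rw [sub_self, add_zero] at this
    simpa only [hG] using this
  have hGF : ∀ k, ENNReal.ofReal (∫ t, G k t ∂ν) ≤ ∫⁻ t, ENNReal.ofReal (F k t) ∂ν := by
    intro k
    refine (ofReal_integral_le_lintegral_ofReal
      (hfA.add (hdiff k))).trans (lintegral_mono_ae ?_)
    filter_upwards [hsub k] with t ht
    by_cases htA : t ∈ A
    · refine ENNReal.ofReal_le_ofReal (le_of_eq_of_le ?_ ht)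
      simp [w, htA, real_inner_comm, inner_sub_right]
    · simp [w, htA]
  calc ∫⁻ t in A, ENNReal.ofReal (f t) ∂ν
      = ENNReal.ofReal (∫ t, A.indicator f t ∂ν) := by
        rw [ofReal_integral_eq_lintegral_ofReal hfA (by
          filter_upwards [hf0] with t ht; exact Set.indicator_nonneg (fun _ _ => ht) t),
          ← lintegral_indicator hA]
        refine lintegral_congr fun t => ?_
        by_cases htA : t ∈ A <;> simp [htA]
    _ ≤ _ := hlim.liminf_eq.symm.trans_le (liminf_le_liminf (Eventually.of_forall hGF))

theorem lintegral_le_liminf_of_forall_add_inner_le [IsFiniteMeasure ν] {f : α → ℝ} {g : α → H}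
    {F : ℕ → α → ℝ} {vseq : ℕ → α → H} {v : α → H}
    (hf : AEStronglyMeasurable f ν) (hf0 : 0 ≤ᵐ[ν] f) (hg : AEStronglyMeasurable g ν)
    (hvk : ∀ k, MemLp (vseq k) 2 ν) (hv : MemLp v 2 ν)
    (hweak : TendstoWeaklyInL2 ν vseq v)
    (hsub : ∀ k, ∀ᵐ t ∂ν, f t + ⟪g t, vseq k t - v t⟫_ℝ ≤ F k t) :
    ∫⁻ t, ENNReal.ofReal (f t) ∂ν ≤
      liminf (fun k => ∫⁻ t, ENNReal.ofReal (F k t) ∂ν) atTop := by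
  set A : ℕ → Set α := fun n => {t | hf.mk f t ≤ n ∧ ‖hg.mk g t‖ ≤ n}
  have hA : ∀ n, MeasurableSet (A n) := fun n =>
    (measurableSet_le hf.stronglyMeasurable_mk.measurable measurable_const).inter
      (measurableSet_le hg.stronglyMeasurable_mk.norm.measurable measurable_const)
  have hmono : Monotone A := fun n m hnm t ⟨h₁, h₂⟩ =>
    ⟨h₁.trans (Nat.cast_le.2 hnm), h₂.trans (Nat.cast_le.2 hnm)⟩
  have hcover : ⋃ n, A n = Set.univ := Set.eq_univ_of_forall fun t => by
    obtain ⟨n, hn⟩ := exists_nat_ge (max (hf.mk f t) ‖hg.mk g t‖)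
    exact Set.mem_iUnion.2 ⟨n, (le_max_left _ _).trans hn, (le_max_right _ _).trans hn⟩
  rw [← setLIntegral_univ, ← hcover, setLIntegral_iUnion_of_directed _ hmono.directed_le]
  refine iSup_le fun n => setLIntegral_le_liminf_of_forall_add_inner_le (hA n) (C := n)
    hf hf0 ?_ hg ?_ hvk hv hweak hsub
  · filter_upwards [ae_restrict_mem (hA n), ae_restrict_of_ae hf.ae_eq_mk] with t ht h
    exact h ▸ ht.1
  · filter_upwards [ae_restrict_mem (hA n), ae_restrict_of_ae hg.ae_eq_mk] with t ht h
    exact h ▸ ht.2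

theorem lintegral_le_liminf_of_convexOn [CompleteSpace H] [IsFiniteMeasure ν]
    {E : Type*} [NormedAddCommGroup E] [NormedSpace ℝ E] {ψ : E → H → ℝ} {μw : α → ℝ}
    {a : α → E} {vseq : ℕ → α → H} {v : α → H} (hψnn : ∀ x y, 0 ≤ ψ x y)
    (hψ : ContDiff ℝ 1 (fun p : E × H => ψ p.1 p.2)) (hψconv : ∀ x, ConvexOn ℝ Set.univ (ψ x))
    (hμ : AEStronglyMeasurable μw ν) (hμnn : ∀ t, 0 ≤ μw t) (ha : AEStronglyMeasurable a ν)
    (hvk : ∀ k, MemLp (vseq k) 2 ν) (hv : MemLp v 2 ν)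
    (hweak : TendstoWeaklyInL2 ν vseq v) :
    ∫⁻ t, ENNReal.ofReal (μw t * ψ (a t) (v t)) ∂ν ≤
      liminf (fun k => ∫⁻ t, ENNReal.ofReal (μw t * ψ (a t) (vseq k t)) ∂ν) atTop := by
  have hav : AEStronglyMeasurable (fun t => (a t, v t)) ν := ha.prodMk hv.1
  refine lintegral_le_liminf_of_forall_add_inner_le (g := fun t => μw t • ∇ (ψ (a t)) (v t))
    (hμ.mul (hψ.continuous.comp_aestronglyMeasurable hav))
    (ae_of_all _ fun t => mul_nonneg (hμnn t) (hψnn _ _))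
    (hμ.smul (hψ.continuous_gradient_right.comp_aestronglyMeasurable hav)) hvk hv hweak
    fun k => ae_of_all _ fun t => ?_
  have hd : Differentiable ℝ (ψ (a t)) := (hψ.differentiable one_ne_zero).comp
    (differentiable_const (a t) |>.prodMk differentiable_id)
  rw [real_inner_smul_left, ← mul_add]
  exact mul_le_mul_of_nonneg_left ((hψconv (a t)).add_inner_gradient_le hd _ _) (hμnn t)

end WeakLowerSemicontinuity

theorem le_liminf_lintegral_of_tendstoUniformlyOn {E H : Type*} [NormedAddCommGroup E]
    [NormedSpace ℝ E] [NormedAddCommGroup H] [InnerProductSpace ℝ H] [CompleteSpace H]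
    [IsFiniteMeasure ν] {ψ : E → H → ℝ} {μw : α → ℝ} {M R c : ℝ} {s : Set α}
    {u : ℕ → α → E} {ulim : α → E} {vseq : ℕ → α → H} {v : α → H}
    (hψnn : ∀ x y, 0 ≤ ψ x y) (hψ : ContDiff ℝ 1 (fun p : E × H => ψ p.1 p.2))
    (hψconv : ∀ x, ConvexOn ℝ Set.univ (ψ x))
    (hc : ∀ x w, ‖x‖ ≤ R + 1 → ‖fderiv ℝ (fun x => ψ x w) x‖ ≤ c * (1 + ‖w‖ ^ 2))
    (hμ : AEStronglyMeasurable μw ν) (hμnn : ∀ t, 0 ≤ μw t) (hμbdd : ∀ t, μw t ≤ M)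
    (hs : ∀ᵐ t ∂ν, t ∈ s) (hR : ∀ t ∈ s, ‖ulim t‖ ≤ R) (hu : TendstoUniformlyOn u ulim atTop s)
    (hulim : AEStronglyMeasurable ulim ν) (hvk : ∀ k, MemLp (vseq k) 2 ν) (hv : MemLp v 2 ν)
    (hweak : TendstoWeaklyInL2 ν vseq v) :
    ∫⁻ t, ENNReal.ofReal (μw t * ψ (ulim t) (v t)) ∂ν ≤
      liminf (fun k => ∫⁻ t, ENNReal.ofReal (μw t * ψ (u k t) (vseq k t)) ∂ν) atTop := by
  obtain ⟨B, hB, hvB⟩ := hweak.exists_eLpNorm_le hvk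
  have hψ₁ : ∀ w, Differentiable ℝ fun x => ψ x w := fun w =>
    (hψ.differentiable one_ne_zero).comp (differentiable_id.prodMk (differentiable_const w))
  calc _ ≤ liminf (fun k => ∫⁻ t, ENNReal.ofReal (μw t * ψ (ulim t) (vseq k t)) ∂ν) atTop :=
        lintegral_le_liminf_of_convexOn hψnn hψ hψconv hμ hμnn hulim hvk hv hweak
    _ ≤ _ := ENNReal.liminf_le_liminf_of_forall_le_add fun ε hε =>
        (eventually_lintegral_le_add_of_tendstoUniformlyOn hψ₁ hc hμnn hμbdd hs hR hu hB
          hε).mono fun k hk => (hk (vseq k) (hvk k).1 (hvB k)).2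

end Integrals

theorem stmt_4_general {H : Type*} [NormedAddCommGroup H] [InnerProductSpace ℝ H] [CompleteSpace H]
    (ψ : H → H → ℝ) (hψnn : ∀ u v : H, 0 ≤ ψ u v)
    (hψC1 : ContDiff ℝ 1 (fun p : H × H => ψ p.1 p.2))
    (hψconv : ∀ u : H, ConvexOn ℝ Set.univ (ψ u))
    (hbound : ∀ R : ℝ, 0 < R → ∃ c : ℝ, 0 < c ∧ ∀ u v : H, ‖u‖ ≤ R →
      ‖fderiv ℝ (fun x => ψ x v) u‖ ≤ c * (1 + ‖v‖ ^ 2))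
    (T : ℝ)
    (μw : ℝ → ℝ) (hμmeas : Measurable μw) (hμnn : ∀ t, 0 ≤ μw t)
    (M : ℝ) (hμbdd : ∀ t, μw t ≤ M)
    (u : ℕ → ℝ → H) (ulim : ℝ → H)
    (hulimcont : ContinuousOn ulim (Set.Icc 0 T))
    (huconv : TendstoUniformlyOn (fun k t => u k t) ulim atTop (Set.Icc 0 T)) :
    -- (a) liminf inequality along weakly convergent sequences in L²(0,T;H)
    (∀ (vseq : ℕ → ℝ → H) (v : ℝ → H),
      (∀ k, MemLp (vseq k) 2 (volume.restrict (Set.Ioc 0 T))) →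
      MemLp v 2 (volume.restrict (Set.Ioc 0 T)) →
      (∀ w : ℝ → H, MemLp w 2 (volume.restrict (Set.Ioc 0 T)) →
        Tendsto (fun k => ∫ t in Set.Ioc 0 T, (inner ℝ (vseq k t) (w t) : ℝ)) atTop
          (nhds (∫ t in Set.Ioc 0 T, (inner ℝ (v t) (w t) : ℝ)))) →
      (∫⁻ t in Set.Ioc 0 T, ENNReal.ofReal (μw t * ψ (ulim t) (v t))) ≤
        Filter.liminf
          (fun k => ∫⁻ t in Set.Ioc 0 T, ENNReal.ofReal (μw t * ψ (u k t) (vseq k t)))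
          atTop) ∧
    -- (b) recovery sequences, converging strongly in L²(0,T;H)
    (∀ v : ℝ → H, MemLp v 2 (volume.restrict (Set.Ioc 0 T)) →
      ∃ vseq : ℕ → ℝ → H,
        (∀ k, MemLp (vseq k) 2 (volume.restrict (Set.Ioc 0 T))) ∧
        Tendsto (fun k => ∫ t in Set.Ioc 0 T, ‖vseq k t - v t‖ ^ 2) atTop (nhds 0) ∧
        Filter.limsup
            (fun k => ∫⁻ t in Set.Ioc 0 T, ENNReal.ofReal (μw t * ψ (u k t) (vseq k t)))
            atTop =
          ∫⁻ t in Set.Ioc 0 T, ENNReal.ofReal (μw t * ψ (ulim t) (v t))) := by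
  have hs : ∀ᵐ t ∂volume.restrict (Set.Ioc 0 T), t ∈ Set.Icc 0 T :=
    (ae_restrict_mem measurableSet_Ioc).mono fun _ ht => Set.Ioc_subset_Icc_self ht
  obtain ⟨R, hR⟩ := isCompact_Icc.exists_bound_of_continuousOn hulimcont
  have hR' : ∀ t ∈ Set.Icc 0 T, ‖ulim t‖ ≤ |R| := fun t ht => (hR t ht).trans (le_abs_self R)
  obtain ⟨c, -, hc⟩ := hbound (|R| + 1) (by positivity)
  have hψ₁ : ∀ w, Differentiable ℝ fun x => ψ x w := fun w =>
    (hψC1.differentiable one_ne_zero).comp (differentiable_id.prodMk (differentiable_const w))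
  refine ⟨fun vseq v hvk hv hweak => ?_, fun v hv => ⟨fun _ => v, fun _ => hv, by simp, ?_⟩⟩
  · exact le_liminf_lintegral_of_tendstoUniformlyOn hψnn hψC1 hψconv hc
      hμmeas.aestronglyMeasurable hμnn hμbdd hs hR' huconv
      ((hulimcont.mono Set.Ioc_subset_Icc_self).aestronglyMeasurable measurableSet_Ioc)
      hvk hv hweak
  · exact limsup_lintegral_eq_of_tendstoUniformlyOn hψ₁ hc hμnn hμbdd hs hR' huconv hv

/-- Mosco convergence of weighted integral functionals
`v ↦ ∫₀ᵀ μ(t) ψ(u_k(t), v(t)) dt` on `L²(0,T;H)`, when `u_k → u` in `C([0,T];H)`,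
for a `C¹` potential `ψ ≥ 0`, convex in its second variable, with the growth bound
`‖d₁ψ(u,v)‖ ≤ c_{5,R}(1+‖v‖²)`, and a nonnegative weight `μ ∈ L^∞(0,T)`. -/
theorem stmt_4 {H : Type*} [NormedAddCommGroup H] [InnerProductSpace ℝ H] [CompleteSpace H]
    (ψ : H → H → ℝ) (hψnn : ∀ u v : H, 0 ≤ ψ u v)
    (hψC1 : ContDiff ℝ 1 (fun p : H × H => ψ p.1 p.2))
    (hψconv : ∀ u : H, ConvexOn ℝ Set.univ (ψ u))
    (hbound : ∀ R : ℝ, 0 < R → ∃ c : ℝ, 0 < c ∧ ∀ u v : H, ‖u‖ ≤ R →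
      ‖fderiv ℝ (fun x => ψ x v) u‖ ≤ c * (1 + ‖v‖ ^ 2))
    (T : ℝ) (hT : 0 < T)
    (μw : ℝ → ℝ) (hμmeas : Measurable μw) (hμnn : ∀ t, 0 ≤ μw t)
    (M : ℝ) (hμbdd : ∀ t, μw t ≤ M)
    (u : ℕ → ℝ → H) (ulim : ℝ → H)
    (hucont : ∀ k, ContinuousOn (u k) (Set.Icc 0 T))
    (hulimcont : ContinuousOn ulim (Set.Icc 0 T))
    (huconv : TendstoUniformlyOn (fun k t => u k t) ulim atTop (Set.Icc 0 T)) :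
    -- (a) liminf inequality along weakly convergent sequences in L²(0,T;H)
    (∀ (vseq : ℕ → ℝ → H) (v : ℝ → H),
      (∀ k, MemLp (vseq k) 2 (volume.restrict (Set.Ioc 0 T))) →
      MemLp v 2 (volume.restrict (Set.Ioc 0 T)) →
      (∀ w : ℝ → H, MemLp w 2 (volume.restrict (Set.Ioc 0 T)) →
        Tendsto (fun k => ∫ t in Set.Ioc 0 T, (inner ℝ (vseq k t) (w t) : ℝ)) atTop
          (nhds (∫ t in Set.Ioc 0 T, (inner ℝ (v t) (w t) : ℝ)))) →
      (∫⁻ t in Set.Ioc 0 T, ENNReal.ofReal (μw t * ψ (ulim t) (v t))) ≤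
        Filter.liminf
          (fun k => ∫⁻ t in Set.Ioc 0 T, ENNReal.ofReal (μw t * ψ (u k t) (vseq k t)))
          atTop) ∧
    -- (b) recovery sequences, converging strongly in L²(0,T;H)
    (∀ v : ℝ → H, MemLp v 2 (volume.restrict (Set.Ioc 0 T)) →
      ∃ vseq : ℕ → ℝ → H,
        (∀ k, MemLp (vseq k) 2 (volume.restrict (Set.Ioc 0 T))) ∧
        Tendsto (fun k => ∫ t in Set.Ioc 0 T, ‖vseq k t - v t‖ ^ 2) atTop (nhds 0) ∧
        Filter.limsup
            (fun k => ∫⁻ t in Set.Ioc 0 T, ENNReal.ofReal (μw t * ψ (u k t) (vseq k t)))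
            atTop =
          ∫⁻ t in Set.Ioc 0 T, ENNReal.ofReal (μw t * ψ (ulim t) (v t))) :=
  stmt_4_general ψ hψnn hψC1 hψconv hbound T μw hμmeas hμnn M hμbdd u ulim hulimcont huconv
end

section
/- Let H be a real Hilbert space and ψ ∈ C²(H × H; [0,∞)). Assume that for some R > 0 there are constants c₈, c₁₀ > 0 such that ‖d₂ψ(u₁,v) − d₂ψ(u₂,v)‖_H ≤ c₈‖u₁ − u₂‖_H‖v‖_H for all u₁, u₂, v ∈ H with ‖u₁‖_H, ‖u₂‖_H ≤ R, and (d₂₂ψ(u,v)w, w) ≥ c₁₀‖w‖_H² for all u, v, w ∈ H with ‖u‖_H ≤ R. Then for all u₁, u₂, v₁, v₂ ∈ H with ‖u₁‖_H, ‖u₂‖_H ≤ R one has (d₂ψ(u₁,v₁) − d₂ψ(u₂,v₂), v₁ − v₂) ≥ (c₁₀/2)‖v₁ − v₂‖_H² − (c₈²/(2c₁₀))‖u₁ − u₂‖_H²‖v₂‖_H². -/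
/-!
Split `d₂ψ(u₁,v₁) − d₂ψ(u₂,v₂)` at `d₂ψ(u₁,v₂)`. Along the segment from `v₂` to `v₁` the slope
`t ↦ d₂ψ(u₁, v₂ + t(v₁ − v₂))(v₁ − v₂)` has derivative `d₂₂ψ(…)(v₁ − v₂, v₁ − v₂) ≥ c₁₀‖v₁ − v₂‖²`,
so the first part contributes at least `c₁₀‖v₁ − v₂‖²`; the Lipschitz bound costs at most
`c₈‖u₁ − u₂‖‖v₂‖‖v₁ − v₂‖` in the second, and Young's inequality absorbs this cross term into
half of the coercive term.
-/

theorem mul_norm_sub_sq_le_fderiv_sub_apply {E : Type*} [NormedAddCommGroup E] [NormedSpace ℝ E]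
    {f : E → ℝ} (hf : Differentiable ℝ (fderiv ℝ f)) {c : ℝ}
    (hcoer : ∀ v w : E, c * ‖w‖ ^ 2 ≤ fderiv ℝ (fderiv ℝ f) v w w) (x y : E) :
    c * ‖x - y‖ ^ 2 ≤ (fderiv ℝ f x - fderiv ℝ f y) (x - y) := by
  set w := x - y
  have hslope : ∀ t : ℝ, HasDerivAt (fun t : ℝ => fderiv ℝ f (y + t • w) w)
      (fderiv ℝ (fderiv ℝ f) (y + t • w) w w) t := fun t =>
    (ContinuousLinearMap.apply ℝ ℝ w).hasFDerivAt.comp_hasDerivAt t <|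
      (hf _).hasFDerivAt.comp_hasDerivAt t
        (((hasDerivAt_id t).smul_const w).const_add y |>.congr_deriv (one_smul ℝ w))
  have := mul_sub_le_image_sub_of_le_deriv (fun t => (hslope t).differentiableAt)
    (fun t => (hslope t).deriv ▸ hcoer (y + t • w) w) zero_le_one
  simpa [w] using this

theorem half_mul_sq_sub_le_mul_sq_sub_mul {c : ℝ} (hc : 0 < c) (a b : ℝ) :
    c / 2 * a ^ 2 - b ^ 2 / (2 * c) ≤ c * a ^ 2 - b * a := by
  have hsq : c * a ^ 2 - b * a - (c / 2 * a ^ 2 - b ^ 2 / (2 * c)) =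
      (c * a - b) ^ 2 / (2 * c) := by
    field_simp
    ring
  have : 0 ≤ (c * a - b) ^ 2 / (2 * c) := by positivity
  linarith

theorem stmt_5_general {H : Type*} [NormedAddCommGroup H] [InnerProductSpace ℝ H]
    (ψ : H → H → ℝ)
    (hψC2 : ContDiff ℝ 2 (fun p : H × H => ψ p.1 p.2))
    (R c₈ c₁₀ : ℝ) (hc₁₀ : 0 < c₁₀)
    (hLip : ∀ u₁ u₂ v : H, ‖u₁‖ ≤ R → ‖u₂‖ ≤ R →
      ‖fderiv ℝ (ψ u₁) v - fderiv ℝ (ψ u₂) v‖ ≤ c₈ * ‖u₁ - u₂‖ * ‖v‖)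
    (hcoer : ∀ u v w : H, ‖u‖ ≤ R →
      c₁₀ * ‖w‖ ^ 2 ≤ fderiv ℝ (fun y => fderiv ℝ (ψ u) y) v w w) :
    ∀ u₁ u₂ v₁ v₂ : H, ‖u₁‖ ≤ R → ‖u₂‖ ≤ R →
      (fderiv ℝ (ψ u₁) v₁ - fderiv ℝ (ψ u₂) v₂) (v₁ - v₂) ≥
        c₁₀ / 2 * ‖v₁ - v₂‖ ^ 2 - c₈ ^ 2 / (2 * c₁₀) * ‖u₁ - u₂‖ ^ 2 * ‖v₂‖ ^ 2 := by
  intro u₁ u₂ v₁ v₂ hu₁ hu₂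
  have hpartial : ContDiff ℝ 2 (ψ u₁) := hψC2.comp (contDiff_const.prodMk contDiff_id)
  have hmono : c₁₀ * ‖v₁ - v₂‖ ^ 2 ≤ (fderiv ℝ (ψ u₁) v₁ - fderiv ℝ (ψ u₁) v₂) (v₁ - v₂) :=
    mul_norm_sub_sq_le_fderiv_sub_apply
      ((hpartial.fderiv_right le_rfl).differentiable one_ne_zero) (hcoer u₁ · · hu₁) v₁ v₂
  have hshift : -(c₈ * ‖u₁ - u₂‖ * ‖v₂‖ * ‖v₁ - v₂‖) ≤
      (fderiv ℝ (ψ u₁) v₂ - fderiv ℝ (ψ u₂) v₂) (v₁ - v₂) := by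
    refine neg_le_of_abs_le ?_
    rw [← Real.norm_eq_abs]
    exact (ContinuousLinearMap.le_opNorm _ _).trans
      (mul_le_mul_of_nonneg_right (hLip u₁ u₂ v₂ hu₁ hu₂) (norm_nonneg _))
  have hyoung := half_mul_sq_sub_le_mul_sq_sub_mul hc₁₀ ‖v₁ - v₂‖ (c₈ * ‖u₁ - u₂‖ * ‖v₂‖)
  have hsq : (c₈ * ‖u₁ - u₂‖ * ‖v₂‖) ^ 2 / (2 * c₁₀) =
      c₈ ^ 2 / (2 * c₁₀) * ‖u₁ - u₂‖ ^ 2 * ‖v₂‖ ^ 2 := by ring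
  simp only [sub_apply] at hmono hshift ⊢
  linarith

/-- Strong monotonicity-type estimate for the second partial differential of `ψ`:
under a Lipschitz bound on `d₂ψ` in the first variable and coercivity of `d₂₂ψ`,
`(d₂ψ(u₁,v₁) − d₂ψ(u₂,v₂), v₁ − v₂) ≥ (c₁₀/2)‖v₁−v₂‖² − (c₈²/(2c₁₀))‖u₁−u₂‖²‖v₂‖²`. -/
theorem stmt_5 {H : Type*} [NormedAddCommGroup H] [InnerProductSpace ℝ H] [CompleteSpace H]
    (ψ : H → H → ℝ) (hψnn : ∀ u v : H, 0 ≤ ψ u v)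
    (hψC2 : ContDiff ℝ 2 (fun p : H × H => ψ p.1 p.2))
    (R c₈ c₁₀ : ℝ) (hR : 0 < R) (hc₈ : 0 < c₈) (hc₁₀ : 0 < c₁₀)
    (hLip : ∀ u₁ u₂ v : H, ‖u₁‖ ≤ R → ‖u₂‖ ≤ R →
      ‖fderiv ℝ (ψ u₁) v - fderiv ℝ (ψ u₂) v‖ ≤ c₈ * ‖u₁ - u₂‖ * ‖v‖)
    (hcoer : ∀ u v w : H, ‖u‖ ≤ R →
      c₁₀ * ‖w‖ ^ 2 ≤ fderiv ℝ (fun y => fderiv ℝ (ψ u) y) v w w) :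
    ∀ u₁ u₂ v₁ v₂ : H, ‖u₁‖ ≤ R → ‖u₂‖ ≤ R →
      (fderiv ℝ (ψ u₁) v₁ - fderiv ℝ (ψ u₂) v₂) (v₁ - v₂) ≥
        c₁₀ / 2 * ‖v₁ - v₂‖ ^ 2 - c₈ ^ 2 / (2 * c₁₀) * ‖u₁ - u₂‖ ^ 2 * ‖v₂‖ ^ 2 :=
  stmt_5_general ψ hψC2 R c₈ c₁₀ hc₁₀ hLip hcoer
end
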